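/- Let k be a commutative ring and R a k-algebra that is a local ring and a topological ring with R^× open in R and inversion R^× → R^× continuous for the subspace topology. Then every open immersion φ : Y → X of k-schemes induces an open topological embedding φ_R : Y(R) → X(R) (a homeomorphism onto an open subset) with respect to the fine topologies. -/

import Mathlib

open AlgebraicGeometry CategoryTheory CategoryTheory.Limits Opposite TopologicalSpace

universe u

noncomputable section

/-- The affine topology on the set of `k`-algebra homomorphisms `A →ₐ[k] R`:
the coarsest topology making all evaluation maps `f ↦ f a` continuous. -/
def affineTopology (k A R : Type*) [CommRing k] [CommRing A] [CommRing R]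
    [Algebra k A] [Algebra k R] [TopologicalSpace R] :
    TopologicalSpace (A →ₐ[k] R) :=
  TopologicalSpace.induced (fun f (a : A) => f a) Pi.topologicalSpace

namespace SchemePoints

variable (k R : Type u) [CommRing k] [CommRing R] [Algebra k R]

/-- `Spec R` as a scheme over `Spec k`. -/
def specOver : Over (Spec (CommRingCat.of k)) :=
  Over.mk (Spec.map (CommRingCat.ofHom (algebraMap k R)))

/-- The set `X(R)` of `R`-rational points of a `k`-scheme `X`, i.e. morphisms
`Spec R ⟶ X` over `Spec k`. -/
def pts (X : Over (Spec (CommRingCat.of k))) : Type u :=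
  specOver k R ⟶ X

/-- Evaluation of a global section of `X` at an `R`-rational point. -/
def ev [TopologicalSpace R] (X : Over (Spec (CommRingCat.of k))) (g : pts k R X)
    (a : Γ(X.left, ⊤)) : R :=
  (Scheme.ΓSpecIso (CommRingCat.of R)).hom (Scheme.Hom.appTop ((Over.forget _).map g) a)

/-- The affine topology on `X(R)`. -/
def affineTop [TopologicalSpace R] (X : Over (Spec (CommRingCat.of k))) :
    TopologicalSpace (pts k R X) :=
  TopologicalSpace.induced (fun g (a : Γ(X.left, ⊤)) => ev k R X g a) Pi.topologicalSpace

/-- The fine topology on `X(R)`: the finest topology such that for every morphism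
`U ⟶ X` from an affine `k`-scheme `U`, the induced map `U(R) → X(R)` is continuous,
where `U(R)` carries the affine topology. -/
def fineTop [TopologicalSpace R] (X : Over (Spec (CommRingCat.of k))) :
    TopologicalSpace (pts k R X) :=
  ⨆ (U : Over (Spec (CommRingCat.of k))) (_ : IsAffine U.left) (φ : U ⟶ X),
    (affineTop k R U).coinduced (fun g => g ≫ φ)

end SchemePoints

open SchemePoints Topology

/-!
Since `R` is local, every point of `Spec R` specializes to the closed point, so an `R`-point
lies in an open subscheme as soon as its closed point does; for a basic open `D(a)` this means
that `g(a)` is a unit. Given an affine chart `ψ : U → X` and `g ∈ ψ_R⁻¹(φ_R(S))`, choose `D(a)`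
containing the closed point of `g` on which `ψ` factors through `φ`. The points `g'` with
`g'(a) ∈ Rˣ` whose restriction to `D(a)` maps into `S` then form a neighbourhood of `g` in
`ψ_R⁻¹(φ_R(S))`: the condition `g'(a) ∈ Rˣ` is open because `Rˣ` is, and restriction to
`D(a)(R)` is continuous there because sections over `D(a)` are fractions `c / aⁿ`, evaluated as
`g'(c) · g'(a)⁻¹ⁿ`, and inversion is continuous on `Rˣ`.
-/

open IsLocalRing

namespace SchemePoints

section OverLift

variable {S : Scheme.{u}} {X Y Z : Over S}

def overLift (φ : Y ⟶ X) [IsOpenImmersion φ.left] (f : Z ⟶ X)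
    (H : Set.range f.left.base ⊆ Set.range φ.left.base) : Z ⟶ Y :=
  Over.homMk (IsOpenImmersion.lift φ.left f.left H)
    (by rw [← Over.w φ, IsOpenImmersion.lift_fac_assoc, Over.w f])

@[simp]
lemma overLift_comp (φ : Y ⟶ X) [IsOpenImmersion φ.left] (f : Z ⟶ X)
    (H : Set.range f.left.base ⊆ Set.range φ.left.base) : overLift φ f H ≫ φ = f := by
  ext1
  exact IsOpenImmersion.lift_fac _ _ _

lemma comp_left_injective_of_isOpenImmersion (φ : Y ⟶ X) [IsOpenImmersion φ.left] :
    Function.Injective (fun f : Z ⟶ Y => f ≫ φ) :=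
  have := Over.mono_of_mono_left φ
  fun _ _ h => (cancel_mono φ).1 h

def basicOpenOver (U : Over S) (a : Γ(U.left, ⊤)) : Over S :=
  Over.mk ((U.left.basicOpen a).ι ≫ U.hom)

def basicOpenOverι (U : Over S) (a : Γ(U.left, ⊤)) : basicOpenOver U a ⟶ U :=
  Over.homMk (U.left.basicOpen a).ι rfl

instance (U : Over S) [IsAffine U.left] (a : Γ(U.left, ⊤)) :
    IsAffine (basicOpenOver U a).left :=
  (isAffineOpen_top U.left).basicOpen a

instance (U : Over S) (a : Γ(U.left, ⊤)) : IsOpenImmersion (basicOpenOverι U a).left :=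
  inferInstanceAs (IsOpenImmersion (U.left.basicOpen a).ι)

end OverLift

lemma exists_mul_ι_appTop_pow_eq (U : Scheme.{u}) [IsAffine U] (a : Γ(U, ⊤))
    (b : Γ(U.basicOpen a, ⊤)) :
    ∃ (n : ℕ) (c : Γ(U, ⊤)),
      b * (U.basicOpen a).ι.appTop (a ^ n) = (U.basicOpen a).ι.appTop c := by
  obtain ⟨⟨c, _, n, rfl⟩, h⟩ :=
    IsLocalization.surj (Submonoid.powers a) ((U.basicOpen a).topIso.hom b)
  have topIso_ι_appTop : ∀ x, (U.basicOpen a).topIso.hom ((U.basicOpen a).ι.appTop x) =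
      algebraMap Γ(U, ⊤) Γ(U, U.basicOpen a) x := fun x => by
    change ((U.basicOpen a).ι.appTop ≫ (U.basicOpen a).topIso.hom) x = _
    rw [Scheme.Opens.ι_appTop, Scheme.Opens.topIso_hom]
    erw [← Functor.map_comp]
    rfl
  refine ⟨n, c, (ConcreteCategory.bijective_of_isIso (U.basicOpen a).topIso.hom).1 ?_⟩
  simpa only [map_mul, map_pow, topIso_ι_appTop] using h

lemma range_subset_iff_closedPoint_mem {R : Type u} [CommRing R] [IsLocalRing R] {Z : Scheme.{u}}
    (f : Spec (CommRingCat.of R) ⟶ Z) {W : Set Z} (hW : IsOpen W) :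
    Set.range f.base ⊆ W ↔ f.base (closedPoint R) ∈ W :=
  ⟨fun h => h ⟨_, rfl⟩, by
    rintro h _ ⟨x, rfl⟩
    exact ((specializes_closedPoint x).map f.continuous).mem_open hW h⟩

section Points

variable {k R : Type u} [CommRing k] [CommRing R] [Algebra k R] [TopologicalSpace R]
  {X Y : Over (Spec (CommRingCat.of k))}

lemma ev_comp (ψ : Y ⟶ X) (g : pts k R Y) (c : Γ(X.left, ⊤)) :
    ev k R X (g ≫ ψ) c = ev k R Y g (ψ.left.appTop c) :=
  rfl

lemma ev_mul (g : pts k R X) (a b : Γ(X.left, ⊤)) :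
    ev k R X g (a * b) = ev k R X g a * ev k R X g b :=
  map_mul (g.left.appTop ≫ (Scheme.ΓSpecIso (CommRingCat.of R)).hom).hom a b

lemma ev_pow (g : pts k R X) (a : Γ(X.left, ⊤)) (n : ℕ) :
    ev k R X g (a ^ n) = ev k R X g a ^ n :=
  map_pow (g.left.appTop ≫ (Scheme.ΓSpecIso (CommRingCat.of R)).hom).hom a n

lemma closedPoint_mem_basicOpen_iff [IsLocalRing R] (g : pts k R X) (a : Γ(X.left, ⊤)) :
    g.left.base (closedPoint R) ∈ X.left.basicOpen a ↔ IsUnit (ev k R X g a) := by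
  change closedPoint R ∈ g.left ⁻¹ᵁ X.left.basicOpen a ↔ _
  rw [Scheme.preimage_basicOpen_top]
  change closedPoint R ∈ (Spec (CommRingCat.of R)).basicOpen (g.left.appTop a) ↔ _
  erw [basicOpen_eq_of_affine', PrimeSpectrum.mem_basicOpen]
  simp only [closedPoint, mem_maximalIdeal, mem_nonunits_iff, not_not]
  rfl

variable [IsLocalRing R]

def restrictBasicOpen {U : Over (Spec (CommRingCat.of k))} {a : Γ(U.left, ⊤)} (g : pts k R U)
    (hg : IsUnit (ev k R U g a)) : pts k R (basicOpenOver U a) :=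
  overLift (basicOpenOverι U a) g <| by
    change Set.range g.left.base ⊆ Set.range (U.left.basicOpen a).ι
    rw [Scheme.Opens.range_ι]
    exact (range_subset_iff_closedPoint_mem _ (U.left.basicOpen a).isOpen).2
      ((closedPoint_mem_basicOpen_iff g a).2 hg)

@[simp]
lemma restrictBasicOpen_comp {U : Over (Spec (CommRingCat.of k))} {a : Γ(U.left, ⊤)}
    (g : pts k R U) (hg : IsUnit (ev k R U g a)) :
    restrictBasicOpen g hg ≫ basicOpenOverι U a = g :=
  overLift_comp _ _ _

lemma restrictBasicOpen_comp_assoc {U : Over (Spec (CommRingCat.of k))} {a : Γ(U.left, ⊤)}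
    (g : pts k R U) (hg : IsUnit (ev k R U g a)) (ψ : U ⟶ X) :
    restrictBasicOpen g hg ≫ basicOpenOverι U a ≫ ψ = g ≫ ψ :=
  (Category.assoc _ _ _).symm.trans (congrArg (· ≫ ψ) (restrictBasicOpen_comp g hg))

lemma ev_restrictBasicOpen_ι_appTop {U : Over (Spec (CommRingCat.of k))} {a : Γ(U.left, ⊤)}
    (g : pts k R U) (hg : IsUnit (ev k R U g a)) (c : Γ(U.left, ⊤)) :
    ev k R _ (restrictBasicOpen g hg) ((basicOpenOverι U a).left.appTop c) = ev k R U g c := by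
  conv_rhs => rw [← restrictBasicOpen_comp g hg]
  exact (ev_comp _ _ c).symm

lemma ev_restrictBasicOpen {U : Over (Spec (CommRingCat.of k))} {a : Γ(U.left, ⊤)}
    (g : pts k R U) (hg : IsUnit (ev k R U g a)) {n : ℕ} {c : Γ(U.left, ⊤)}
    {b : Γ((basicOpenOver U a).left, ⊤)}
    (hb : b * (basicOpenOverι U a).left.appTop (a ^ n) = (basicOpenOverι U a).left.appTop c) :
    ev k R _ (restrictBasicOpen g hg) b = ev k R U g c * Ring.inverse (ev k R U g a) ^ n := by
  have h : ev k R _ (restrictBasicOpen g hg) b * ev k R U g a ^ n = ev k R U g c := by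
    rw [← ev_pow, ← ev_restrictBasicOpen_ι_appTop g hg, ← ev_restrictBasicOpen_ι_appTop g hg,
      ← ev_mul, hb]
  rw [← h, mul_assoc, ← mul_pow, Ring.mul_inverse_cancel _ hg, one_pow, mul_one]

lemma exists_basicOpen_factor {U : Over (Spec (CommRingCat.of k))}
    [IsAffine U.left] (φ : Y ⟶ X) [IsOpenImmersion φ.left] (ψ : U ⟶ X) {g : pts k R U}
    {y : pts k R Y} (hy : y ≫ φ = g ≫ ψ) :
    ∃ a : Γ(U.left, ⊤), IsUnit (ev k R U g a) ∧
      ∃ f : basicOpenOver U a ⟶ Y, f ≫ φ = basicOpenOverι U a ≫ ψ := by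
  have hg : g.left.base (closedPoint R) ∈ ψ.left ⁻¹ᵁ φ.left.opensRange :=
    ⟨y.left.base (closedPoint R), congrArg (fun t : pts k R X => t.left.base (closedPoint R)) hy⟩
  obtain ⟨a, hle, hga⟩ := (isAffineOpen_top U.left).exists_basicOpen_le ⟨_, hg⟩ trivial
  refine ⟨a, (closedPoint_mem_basicOpen_iff g a).1 hga, overLift φ _ ?_, overLift_comp _ _ _⟩
  rintro _ ⟨x, rfl⟩
  exact hle x.2

end Points

section Topology

variable {k R : Type u} [CommRing k] [CommRing R] [Algebra k R] [TopologicalSpace R]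
  {X Y : Over (Spec (CommRingCat.of k))}

lemma continuous_ev (a : Γ(X.left, ⊤)) : Continuous[affineTop k R X, _] (ev k R X · a) := by
  let := affineTop k R X
  exact (continuous_apply a).comp
    (continuous_induced_dom : Continuous fun g (a : Γ(X.left, ⊤)) => ev k R X g a)

lemma isOpen_setOf_isUnit_ev (hunits : IsOpen {r : R | IsUnit r}) (a : Γ(X.left, ⊤)) :
    IsOpen[affineTop k R X] {g | IsUnit (ev k R X g a)} := by
  let := affineTop k R X
  exact hunits.preimage (continuous_ev a)

lemma continuous_restrictBasicOpen [IsTopologicalRing R] [IsLocalRing R]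
    (hinv : ContinuousOn (fun r : R => Ring.inverse r) {r : R | IsUnit r})
    (U : Over (Spec (CommRingCat.of k))) [IsAffine U.left] (a : Γ(U.left, ⊤)) :
    Continuous[(affineTop k R U).induced Subtype.val, affineTop k R (basicOpenOver U a)]
      (fun g : {g // IsUnit (ev k R U g a)} => restrictBasicOpen g.1 g.2) := by
  let := affineTop k R U
  refine continuous_induced_rng.2 (continuous_pi fun b => ?_)
  obtain ⟨n, c, hb⟩ := exists_mul_ι_appTop_pow_eq U.left a b
  change Continuous fun g : {g // _} => ev k R _ (restrictBasicOpen g.1 g.2) b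
  simp only [ev_restrictBasicOpen _ _ hb]
  have hinv' : Continuous fun g : {g // IsUnit (ev k R U g a)} => Ring.inverse (ev k R U g a) :=
    continuousOn_iff_continuous_domRestrict.1 (hinv.comp (continuous_ev a).continuousOn fun _ => id)
  exact ((continuous_ev c).comp continuous_subtype_val).mul (hinv'.pow n)

lemma isOpen_fineTop_iff (S : Set (pts k R X)) :
    IsOpen[fineTop k R X] S ↔ ∀ (U : Over (Spec (CommRingCat.of k))) [IsAffine U.left]
      (ψ : U ⟶ X), IsOpen[affineTop k R U] ((fun g : pts k R U => g ≫ ψ) ⁻¹' S) := by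
  rw [fineTop]
  simp only [isOpen_iSup_iff]
  rfl

lemma continuous_comp_of_isAffine {U : Over (Spec (CommRingCat.of k))} [IsAffine U.left]
    (ψ : U ⟶ X) : Continuous[affineTop k R U, fineTop k R X] (· ≫ ψ) :=
  continuous_iff_coinduced_le.2 (le_iSup₂_of_le U ‹_› (le_iSup_of_le ψ le_rfl))

lemma continuous_comp (φ : Y ⟶ X) : Continuous[fineTop k R Y, fineTop k R X] (· ≫ φ) :=
  continuous_iSup_dom.2 fun _ => continuous_iSup_dom.2 fun _ => continuous_iSup_dom.2 fun ψ =>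
    continuous_coinduced_dom.2 (continuous_comp_of_isAffine (ψ ≫ φ))

lemma isOpenMap_comp_of_isOpenImmersion [IsTopologicalRing R] [IsLocalRing R]
    (hunits : IsOpen {r : R | IsUnit r})
    (hinv : ContinuousOn (fun r : R => Ring.inverse r) {r : R | IsUnit r})
    (φ : Y ⟶ X) [IsOpenImmersion φ.left] :
    @IsOpenMap _ _ (fineTop k R Y) (fineTop k R X) (fun g : pts k R Y => g ≫ φ) := by
  intro S hS
  rw [isOpen_fineTop_iff]
  intro U _ ψ
  let := affineTop k R U
  let := fineTop k R Y
  refine isOpen_iff_forall_mem_open.2 ?_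
  rintro g ⟨y, hyS, hy⟩
  obtain ⟨a, hga, f, hf⟩ := exists_basicOpen_factor φ ψ hy
  let F (g' : {g' // IsUnit (ev k R U g' a)}) : pts k R Y := restrictBasicOpen g'.1 g'.2 ≫ f
  have hF (g') : F g' ≫ φ = g'.1 ≫ ψ :=
    (Category.assoc _ _ _).trans ((congrArg _ hf).trans (restrictBasicOpen_comp_assoc _ _ ψ))
  refine ⟨Subtype.val '' (F ⁻¹' S), ?_, ?_, ⟨g, hga⟩, ?_, rfl⟩
  · rintro _ ⟨g', hg'S, rfl⟩
    exact ⟨F g', hg'S, hF g'⟩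
  · let := affineTop k R (basicOpenOver U a)
    refine (isOpen_setOf_isUnit_ev hunits a).isOpenMap_subtype_val _ (hS.preimage ?_)
    exact (continuous_comp_of_isAffine f).comp (continuous_restrictBasicOpen hinv U a)
  · rwa [Set.mem_preimage, comp_left_injective_of_isOpenImmersion φ ((hF _).trans hy.symm)]

end Topology

end SchemePoints

/-- if `R` is a `k`-algebra which is a local topological ring whose unit group
`Rˣ` is open in `R` and on which inversion is continuous for the subspace topology, then every
open immersion `φ : Y → X` of `k`-schemes induces an open topological embedding
`φ_R : Y(R) → X(R)` with respect to the fine topologies. -/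
theorem statement_13 (k R : Type u) [CommRing k] [CommRing R] [Algebra k R]
    [TopologicalSpace R] [IsTopologicalRing R] [IsLocalRing R]
    (hunits : IsOpen {r : R | IsUnit r})
    (hinv : ContinuousOn (fun r : R => Ring.inverse r) {r : R | IsUnit r})
    (X Y : Over (Spec (CommRingCat.of k))) (φ : Y ⟶ X) (hφ : IsOpenImmersion φ.left) :
    @IsOpenEmbedding (pts k R Y) (pts k R X) (fineTop k R Y) (fineTop k R X)
      (fun g => g ≫ φ) :=
  let := fineTop k R Y
  let := fineTop k R X
  .of_continuous_injective_isOpenMap (continuous_comp φ) (comp_left_injective_of_isOpenImmersion φ)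
    (isOpenMap_comp_of_isOpenImmersion hunits hinv φ)
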